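/- Let a ∈ ℂ^M be nonzero, i an index, and v̂ = a + ‖a‖·sign(a_i)·e_i. Then v̂ maximizes |e_i^H Q_v a|² over all nonzero v ∈ ℂ^M: for every nonzero v, |e_i^H Q_v a|² ≤ |e_i^H Q_{v̂} a|². -/

import Mathlib

open Matrix MeasureTheory

/-- Squared... Euclidean norm on `Fin M → ℂ`. -/
noncomputable def enorm' {M : ℕ} (v : Fin M → ℂ) : ℝ :=
  ‖(WithLp.equiv 2 (Fin M → ℂ)).symm v‖

/-- Householder reflection matrix `Q_v = I - (2/‖v‖²) v vᴴ`. -/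
noncomputable def householder {M : ℕ} (v : Fin M → ℂ) : Matrix (Fin M) (Fin M) ℂ :=
  1 - ((2 / enorm' v ^ 2 : ℝ) : ℂ) • Matrix.vecMulVec v (star v)

/-- complex sign: `z/|z|` for `z ≠ 0`, and `1` for `z = 0`. -/
noncomputable def csign (z : ℂ) : ℂ := if z = 0 then 1 else z / (‖z‖ : ℂ)

/-! Every Householder matrix `Q_v` is the reflection in the hyperplane `v^⊥`, hence an isometry,
so `|(Q_v a)_i| ≤ ‖a‖`. For `v̂ = a - w` with `w = -‖a‖ sign(a_i) e_i`, the vectors `a` and `w` have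
the same norm and a real inner product `-‖a‖ |a_i|`, so the reflection in `v̂^⊥` swaps them:
`Q_v̂ a = w`, whose `i`-th entry has modulus exactly `‖a‖`. -/

open Submodule

/- Over a general `RCLike` field, equal norms alone do not make `v + w` orthogonal to `v - w`;
the extra condition is that `⟪v, w⟫` be real. -/
theorem reflection_orthogonal_sub {𝕜 E : Type*} [RCLike 𝕜] [NormedAddCommGroup E]
    [InnerProductSpace 𝕜 E] {v w : E} (hnorm : ‖v‖ = ‖w‖)
    (hinner : inner 𝕜 v w = inner 𝕜 w v) : reflection (𝕜 ∙ (v - w))ᗮ v = w := by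
  set R : E ≃ₗᵢ[𝕜] E := reflection (𝕜 ∙ (v - w))ᗮ
  suffices R v + R v = w + w by
    apply smul_right_injective E (two_ne_zero : (2 : 𝕜) ≠ 0)
    simpa [two_smul] using this
  have h_sub : R (v - w) = -(v - w) := reflection_orthogonalComplement_singleton_eq_neg (v - w)
  have h_add : R (v + w) = v + w := by
    apply reflection_mem_subspace_eq_self
    rw [mem_orthogonal_singleton_iff_inner_right, inner_sub_left, inner_add_right,
      inner_add_right, inner_self_eq_norm_sq_to_K, inner_self_eq_norm_sq_to_K, hnorm, hinner]
    ring
  calc R v + R v = R (v + w) + R (v - w) := by simp only [map_add, map_sub]; abel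
    _ = w + w := by rw [h_add, h_sub]; abel

theorem householder_mulVec_eq_reflection {M : ℕ} (v a : Fin M → ℂ) :
    householder v *ᵥ a = WithLp.ofLp (reflection (ℂ ∙ WithLp.toLp 2 v)ᗮ (WithLp.toLp 2 a)) := by
  rw [reflection_orthogonal_apply, reflection_singleton_apply]
  ext j
  simp only [householder, enorm', Matrix.sub_mulVec, Matrix.smul_mulVec, Matrix.vecMulVec_mulVec,
    Matrix.one_mulVec, EuclideanSpace.inner_toLp_toLp, dotProduct_comm a, WithLp.equiv_symm_apply,
    Complex.ofReal_div, Complex.ofReal_ofNat, Complex.ofReal_pow, op_smul_eq_smul, Pi.sub_apply,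
    Pi.smul_apply, smul_eq_mul, Complex.coe_algebraMap, neg_sub, PiLp.sub_apply, PiLp.smul_apply,
    nsmul_eq_mul, Nat.cast_ofNat, sub_right_inj]
  ring

theorem norm_csign (z : ℂ) : ‖csign z‖ = 1 := by
  unfold csign
  split_ifs with hz
  · exact norm_one
  · rw [norm_div, Complex.norm_of_nonneg (norm_nonneg z), div_self (norm_ne_zero_iff.mpr hz)]

theorem csign_mul_conj (z : ℂ) : csign z * (starRingEnd ℂ) z = ‖z‖ := by
  unfold csign
  split_ifs with hz
  · simp [hz]
  · have : (‖z‖ : ℂ) ≠ 0 := by exact_mod_cast norm_ne_zero_iff.mpr hz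
    rw [div_mul_eq_mul_div, Complex.mul_conj', div_eq_iff this]
    ring

theorem norm_householder_mulVec_apply_le {M : ℕ} (v a : Fin M → ℂ) (i : Fin M) :
    ‖(householder v *ᵥ a) i‖ ≤ enorm' a := by
  rw [householder_mulVec_eq_reflection]
  exact (PiLp.norm_apply_le _ i).trans_eq (LinearIsometryEquiv.norm_map _ _)

theorem householder_mulVec_eq_single {M : ℕ} (a : Fin M → ℂ) (i : Fin M) :
    householder (a + ((enorm' a : ℂ) * csign (a i)) • Pi.single i 1) *ᵥ a
      = Pi.single i (-((enorm' a : ℂ) * csign (a i))) := by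
  set c : ℂ := -((enorm' a : ℂ) * csign (a i))
  have hvhat : WithLp.toLp 2 (a + ((enorm' a : ℂ) * csign (a i)) • Pi.single i 1)
      = WithLp.toLp 2 a - EuclideanSpace.single i c := by
    ext j
    by_cases hj : j = i <;> simp [c, hj]
  have hnorm : ‖WithLp.toLp 2 a‖ = ‖EuclideanSpace.single i c‖ := by
    simp [c, norm_csign, enorm']
  have hinner : inner ℂ (WithLp.toLp 2 a) (EuclideanSpace.single i c)
      = inner ℂ (EuclideanSpace.single i c) (WithLp.toLp 2 a) := by
    rw [EuclideanSpace.inner_single_left, EuclideanSpace.inner_single_right]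
    have h := csign_mul_conj (a i)
    have h' := congrArg (starRingEnd ℂ) h
    simp only [map_mul, Complex.conj_conj, Complex.conj_ofReal] at h'
    simp only [c, map_neg, map_mul, Complex.conj_ofReal]
    linear_combination (-(enorm' a : ℂ)) * (h - h')
  rw [householder_mulVec_eq_reflection, hvhat, reflection_orthogonal_sub hnorm hinner]
  simp

theorem stmt_5_general {M : ℕ} (a : Fin M → ℂ) (i : Fin M)
    (vhat : Fin M → ℂ)
    (hvhat : vhat = a + ((enorm' a : ℂ) * csign (a i)) • (Pi.single i 1 : Fin M → ℂ)) :
    ∀ v : Fin M → ℂ, v ≠ 0 →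
      ‖(householder v).mulVec a i‖ ^ 2
        ≤ ‖(householder vhat).mulVec a i‖ ^ 2 := by
  intro v _
  have hmax : ‖(householder vhat).mulVec a i‖ = enorm' a := by
    rw [hvhat, householder_mulVec_eq_single, Pi.single_eq_same, norm_neg, norm_mul, norm_csign,
      mul_one, Complex.norm_of_nonneg (r := enorm' a) (norm_nonneg _)]
  rw [hmax]
  gcongr
  exact norm_householder_mulVec_apply_le v a i

theorem stmt_5 {M : ℕ} (a : Fin M → ℂ) (ha : a ≠ 0) (i : Fin M)
    (vhat : Fin M → ℂ)
    (hvhat : vhat = a + ((enorm' a : ℂ) * csign (a i)) • (Pi.single i 1 : Fin M → ℂ)) :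
    ∀ v : Fin M → ℂ, v ≠ 0 →
      ‖(householder v).mulVec a i‖ ^ 2
        ≤ ‖(householder vhat).mulVec a i‖ ^ 2 :=
  stmt_5_general a i vhat hvhat
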